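/- Under the identification of S² ⊂ ℝ³ with CP¹ via stereographic projection from (1,0,0) (regarding the plane {v₁ = 0} as ℂ), the image of the embedding θ_δ : B² → S², θ_δ(z) = [√(1 - δ|z|²) : √δ z], is exactly the open set {v ∈ S² : v₁ < 2δ - 1}. -/

import Mathlib

/-- Inverse stereographic projection from `(1,0,0)`, regarding the plane `{v₁ = 0}` as `ℂ`:
the point of `S² ⊂ ℝ³` whose stereographic coordinate is `w`. -/
noncomputable def stereoInv (w : ℂ) : Fin 3 → ℝ :=
  ![(‖w‖ ^ 2 - 1) / (‖w‖ ^ 2 + 1), 2 * w.re / (1 + ‖w‖ ^ 2), 2 * w.im / (1 + ‖w‖ ^ 2)]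

/-!
The first coordinate of `stereoInv w` is `2q - 1` with `q = ‖w‖² / (1 + ‖w‖²)`, and for the
stereographic coordinate `w = √δ z / √(1 - δ‖z‖²)` of `θ_δ(z)` one computes `q = δ‖z‖²`.
So `v₁ < 2δ - 1` says exactly `‖z‖ < 1`, once one checks that `z ↦ w` is inverted by
`w ↦ w / √(δ(1 + ‖w‖²))`.
-/

open Complex

noncomputable def stereoProj (v : Fin 3 → ℝ) : ℂ :=
  ⟨v 1 / (1 - v 0), v 2 / (1 - v 0)⟩

/-- The stereographic coordinate of `θ_δ(z)`. -/
noncomputable def thetaCoord (δ : ℝ) (z : ℂ) : ℂ :=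
  (Real.sqrt δ : ℂ) * z / (Real.sqrt (1 - δ * ‖z‖ ^ 2) : ℂ)

noncomputable def thetaCoordInv (δ : ℝ) (w : ℂ) : ℂ :=
  w / (Real.sqrt (δ * (1 + ‖w‖ ^ 2)) : ℂ)

lemma sq_norm_eq_re_sq_add_im_sq (w : ℂ) : ‖w‖ ^ 2 = w.re ^ 2 + w.im ^ 2 := by
  rw [Complex.sq_norm, normSq_apply]; ring

lemma stereoInv_mem_sphere (w : ℂ) :
    stereoInv w 0 ^ 2 + stereoInv w 1 ^ 2 + stereoInv w 2 ^ 2 = 1 := by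
  simp only [stereoInv, Matrix.cons_val_zero, Matrix.cons_val_one, Matrix.cons_val_two,
    Matrix.head_cons, Matrix.tail_cons, sq_norm_eq_re_sq_add_im_sq]
  field_simp
  ring

lemma stereoInv_apply_zero (w : ℂ) :
    stereoInv w 0 = 2 * (‖w‖ ^ 2 / (1 + ‖w‖ ^ 2)) - 1 := by
  simp only [stereoInv, Matrix.cons_val_zero]
  field_simp
  ring

lemma stereoInv_stereoProj {v : Fin 3 → ℝ} (hv : v 0 ^ 2 + v 1 ^ 2 + v 2 ^ 2 = 1)
    (hv₀ : v 0 ≠ 1) : stereoInv (stereoProj v) = v := by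
  have hd : 1 - v 0 ≠ 0 := sub_ne_zero.mpr hv₀.symm
  have hnorm : ‖stereoProj v‖ ^ 2 = (1 + v 0) / (1 - v 0) := by
    rw [sq_norm_eq_re_sq_add_im_sq, stereoProj]
    field_simp
    linear_combination hv
  simp only [stereoInv, hnorm]
  ext i
  fin_cases i <;>
    simp only [stereoProj, Fin.zero_eta, Fin.mk_one, Fin.reduceFinMk,
      Matrix.cons_val_zero, Matrix.cons_val_one, Matrix.cons_val_two, Matrix.head_cons,
      Matrix.tail_cons] <;>
    field_simp <;> ring

lemma sq_norm_thetaCoord {δ : ℝ} (hδ : 0 ≤ δ) {z : ℂ} (hz : δ * ‖z‖ ^ 2 < 1) :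
    ‖thetaCoord δ z‖ ^ 2 = δ * ‖z‖ ^ 2 / (1 - δ * ‖z‖ ^ 2) := by
  rw [thetaCoord, norm_div, norm_mul, norm_real, norm_real,
    Real.norm_of_nonneg (Real.sqrt_nonneg _), Real.norm_of_nonneg (Real.sqrt_nonneg _), div_pow, mul_pow, Real.sq_sqrt hδ,
    Real.sq_sqrt (sub_nonneg.mpr hz.le)]

lemma stereoInv_thetaCoord_apply_zero {δ : ℝ} (hδ : 0 ≤ δ) {z : ℂ} (hz : δ * ‖z‖ ^ 2 < 1) :
    stereoInv (thetaCoord δ z) 0 = 2 * δ * ‖z‖ ^ 2 - 1 := by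
  have hd : 1 - δ * ‖z‖ ^ 2 ≠ 0 := by linarith
  rw [stereoInv_apply_zero, sq_norm_thetaCoord hδ hz]
  field_simp
  ring

lemma mul_sq_norm_thetaCoordInv {δ : ℝ} (hδ : 0 < δ) (w : ℂ) :
    δ * ‖thetaCoordInv δ w‖ ^ 2 = ‖w‖ ^ 2 / (1 + ‖w‖ ^ 2) := by
  rw [thetaCoordInv, norm_div, norm_real, Real.norm_of_nonneg (Real.sqrt_nonneg _), div_pow,
    Real.sq_sqrt (by positivity)]
  field_simp

lemma thetaCoord_thetaCoordInv {δ : ℝ} (hδ : 0 < δ) (w : ℂ) :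
    thetaCoord δ (thetaCoordInv δ w) = w := by
  have hw : 0 < 1 + ‖w‖ ^ 2 := by positivity
  have hrad : 1 - δ * ‖thetaCoordInv δ w‖ ^ 2 = (1 + ‖w‖ ^ 2)⁻¹ := by
    rw [mul_sq_norm_thetaCoordInv hδ]
    field_simp
    ring
  have ha : (Real.sqrt δ : ℂ) ≠ 0 := ofReal_ne_zero.mpr (Real.sqrt_pos.mpr hδ).ne'
  have hb : (Real.sqrt (1 + ‖w‖ ^ 2) : ℂ) ≠ 0 := ofReal_ne_zero.mpr (Real.sqrt_pos.mpr hw).ne'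
  rw [thetaCoord, hrad, thetaCoordInv, Real.sqrt_inv, Real.sqrt_mul hδ.le]
  push_cast
  field_simp

theorem theta_delta_image (δ : ℝ) (hδ₁ : 1 / 2 < δ) (hδ₂ : δ ≤ 1) :
    {v : Fin 3 → ℝ | ∃ z : ℂ, ‖z‖ < 1 ∧
        v = stereoInv ((Real.sqrt δ : ℂ) * z / (Real.sqrt (1 - δ * ‖z‖ ^ 2) : ℂ))} =
      {v : Fin 3 → ℝ | (v 0) ^ 2 + (v 1) ^ 2 + (v 2) ^ 2 = 1 ∧ v 0 < 2 * δ - 1} := by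
  have hδ : 0 < δ := by linarith
  ext v
  constructor
  · rintro ⟨z, hz, rfl⟩
    have hz₂ : ‖z‖ ^ 2 < 1 := by nlinarith [norm_nonneg z]
    have hδz : δ * ‖z‖ ^ 2 < 1 := by nlinarith
    refine ⟨stereoInv_mem_sphere _, ?_⟩
    rw [← thetaCoord, stereoInv_thetaCoord_apply_zero hδ.le hδz]
    nlinarith
  · rintro ⟨hv, hv₀⟩
    set w := stereoProj v
    have hw : stereoInv w = v := stereoInv_stereoProj hv (by linarith)
    refine ⟨thetaCoordInv δ w, ?_, ?_⟩
    · have hq := mul_sq_norm_thetaCoordInv hδ w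
      have hv₀q := stereoInv_apply_zero w
      rw [hw] at hv₀q
      have hz₂ : ‖thetaCoordInv δ w‖ ^ 2 < 1 := by nlinarith
      exact (pow_lt_one_iff_of_nonneg (norm_nonneg _) two_ne_zero).mp hz₂
    · rw [← thetaCoord, thetaCoord_thetaCoordInv hδ, hw]
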